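/- arXiv:1202.2300 — 5 statements merged into one kernel-verified Lean document; each statement's English description precedes it below -/
import Mathlib

section
/- The odd-girth of a graph is determined by its adjacency spectrum: the odd-girth equals the smallest odd i such that tr A^i ≠ 0 (and tr A^i is a function of the eigenvalues, namely the sum of the i-th powers of the eigenvalues). -/
/-!
A closed walk of length `i` at `u` contributes to the diagonal entry `(A ^ i) u u`, so
`tr A ^ i ≠ 0` exactly when there is a closed walk of length `i`. A shortest odd
closed walk is a cycle: a repeated vertex would split it into two shorter closed walks, one of
them odd. Hence both infima are the same, and `tr A ^ i = ∑ λ ^ i` by diagonalising `A`.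
-/

open SimpleGraph Matrix Finset

namespace Matrix.IsHermitian

theorem trace_pow_eq_sum_eigenvalues_pow {𝕜 n : Type*} [RCLike 𝕜] [Fintype n] [DecidableEq n]
    {A : Matrix n n 𝕜} (hA : A.IsHermitian) (k : ℕ) :
    (A ^ k).trace = ∑ i, (hA.eigenvalues i : 𝕜) ^ k := by
  conv_lhs => rw [hA.spectral_theorem, ← map_pow, Unitary.conjStarAlgAut_apply, trace_mul_cycle,
    Unitary.coe_star_mul_self, Matrix.one_mul, diagonal_pow, trace_diagonal]
  rfl

end Matrix.IsHermitian

namespace SimpleGraph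

variable {V : Type*} {G : SimpleGraph V}

namespace Walk

theorem exists_eq_append_of_not_isPath [DecidableEq V] {a b : V} (p : G.Walk a b)
    (hp : ¬p.IsPath) :
    ∃ (x : V) (q₁ : G.Walk a x) (c : G.Walk x x) (q₂ : G.Walk x b),
      ¬c.Nil ∧ p = (q₁.append c).append q₂ := by
  induction p with
  | nil => exact absurd IsPath.nil hp
  | @cons a y b h q ih =>
    by_cases hq : q.IsPath
    · have ha : a ∈ q.support := by simpa [cons_isPath_iff, hq] using hp
      refine ⟨a, nil, cons h (q.takeUntil a ha), q.dropUntil a ha, not_nil_cons, ?_⟩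
      simp [take_spec]
    · obtain ⟨x, q₁, c, q₂, hc, rfl⟩ := ih hq
      exact ⟨x, cons h q₁, c, q₂, hc, rfl⟩

theorem exists_isCycle_odd_length_le [DecidableEq V] {u : V} (w : G.Walk u u)
    (hw : Odd w.length) :
    ∃ (v : V) (c : G.Walk v v), c.IsCycle ∧ Odd c.length ∧ c.length ≤ w.length := by
  induction hn : w.length using Nat.strong_induction_on generalizing u with
  | _ n ih =>
  subst hn
  cases w with
  | nil => simp at hw
  | cons h p =>
    by_cases hp : p.IsPath
    · refine ⟨u, cons h p, isCycle_iff_isPath_tail_and_le_length.2 ⟨by simpa using hp, ?_⟩,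
        hw, le_rfl⟩
      have : p.length ≠ 0 := fun h0 => h.ne (eq_of_length_eq_zero h0).symm
      rw [length_cons] at hw ⊢
      obtain ⟨k, hk⟩ := hw
      omega
    · obtain ⟨x, q₁, c, q₂, hc_nil, rfl⟩ := p.exists_eq_append_of_not_isPath hp
      have hc : 0 < c.length := not_nil_iff_lt_length.1 hc_nil
      set d := q₂.append (cons h q₁)
      have hlen : (cons h ((q₁.append c).append q₂)).length = c.length + d.length := by
        simp only [d, length_cons, length_append]; omega
      have hd : 0 < d.length := by simp [d, length_append]
      rcases Nat.even_or_odd c.length with hce | hco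
      · have hdo : Odd d.length := by
          rw [hlen, Nat.odd_add'] at hw; exact hw.2 hce
        obtain ⟨v, c', hc', ho, hle⟩ := ih d.length (by omega) d hdo rfl
        exact ⟨v, c', hc', ho, by omega⟩
      · obtain ⟨v, c', hc', ho, hle⟩ := ih c.length (by omega) c hco rfl
        exact ⟨v, c', hc', ho, by omega⟩

end Walk

variable [Fintype V] [DecidableEq V] [DecidableRel G.Adj]

theorem trace_adjMatrix_pow (R : Type*) [Semiring R] (n : ℕ) :
    (G.adjMatrix R ^ n).trace = ∑ u, (Fintype.card {p : G.Walk u u | p.length = n} : R) :=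
  Finset.sum_congr rfl fun u _ => G.adjMatrix_pow_apply_eq_card_walk n u u

theorem trace_adjMatrix_pow_ne_zero_iff (R : Type*) [Semiring R] [CharZero R] (n : ℕ) :
    (G.adjMatrix R ^ n).trace ≠ 0 ↔ ∃ (u : V) (w : G.Walk u u), w.length = n := by
  rw [trace_adjMatrix_pow, ← Nat.cast_sum, Nat.cast_ne_zero]
  simp only [Ne, Finset.sum_eq_zero_iff, Finset.mem_univ, forall_const, Fintype.card_eq_zero_iff,
    not_forall, not_isEmpty_iff, Set.coe_ofPred, nonempty_subtype]

end SimpleGraph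

theorem stmt_3_general {V : Type*} [Fintype V] [DecidableEq V] (G : SimpleGraph V)
    [DecidableRel G.Adj]
    (hA : (G.adjMatrix ℝ).IsHermitian) :
    sInf {n : ℕ | Odd n ∧ ∃ (u : V) (w : G.Walk u u), w.IsCycle ∧ w.length = n}
      = sInf {i : ℕ | Odd i ∧ Matrix.trace ((G.adjMatrix ℝ) ^ i) ≠ 0} ∧
    ∀ i : ℕ, Matrix.trace ((G.adjMatrix ℝ) ^ i) = ∑ x : V, (hA.eigenvalues x) ^ i := by
  refine ⟨csInf_eq_csInf_of_forall_exists_le ?_ ?_, hA.trace_pow_eq_sum_eigenvalues_pow⟩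
  · rintro _ ⟨hodd, u, w, -, rfl⟩
    exact ⟨w.length, ⟨hodd, (trace_adjMatrix_pow_ne_zero_iff ℝ _).2 ⟨u, w, rfl⟩⟩, le_rfl⟩
  · rintro i ⟨hodd, htr⟩
    obtain ⟨u, w, rfl⟩ := (trace_adjMatrix_pow_ne_zero_iff ℝ i).1 htr
    obtain ⟨v, c, hc, hcodd, hle⟩ := w.exists_isCycle_odd_length_le hodd
    exact ⟨c.length, ⟨hcodd, v, c, hc, rfl⟩, hle⟩

/-- The odd-girth of a graph (the length of a shortest odd cycle) is
determined by the adjacency spectrum: it equals the smallest odd `i` with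
`tr A^i ≠ 0`; moreover `tr A^i` is the sum of the `i`-th powers of the eigenvalues. -/
theorem stmt_3 {V : Type*} [Fintype V] [DecidableEq V] (G : SimpleGraph V)
    [DecidableRel G.Adj]
    (hA : (G.adjMatrix ℝ).IsHermitian)
    (hoddcycle : ∃ (u : V) (w : G.Walk u u), w.IsCycle ∧ Odd w.length) :
    sInf {n : ℕ | Odd n ∧ ∃ (u : V) (w : G.Walk u u), w.IsCycle ∧ w.length = n}
      = sInf {i : ℕ | Odd i ∧ Matrix.trace ((G.adjMatrix ℝ) ^ i) ≠ 0} ∧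
    ∀ i : ℕ, Matrix.trace ((G.adjMatrix ℝ) ^ i) = ∑ x : V, (hA.eigenvalues x) ^ i :=
  stmt_3_general G hA
end

section
/- Let Γ be a connected k-regular graph with d+1 distinct eigenvalues and odd-girth at least 2d+1. If u and v are vertices at distance d, then (A^d)_{uv} = π_0/n, where π_0 = ∏_{i=1}^d (k − λ_i) and n is the number of vertices. -/
/-!
Let `q = ∏_{i ≥ 1} (X - λᵢ)`. Since `A` is symmetric with spectrum `{λ₀ = k, …, λ_d}`, the
polynomial `q · (X - k)` annihilates `A`, so every row of `q(A)` is a `k`-eigenvector of `A`.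
On a connected `k`-regular graph such eigenvectors lie in the kernel of the Laplacian and are
constant; as the row sums of `q(A)` equal `q(k)`, every entry of `q(A)` is `q(k)/n`. Finally `q`
is monic of degree `d` and `(A^i)_{uv} = 0` for `i < d = dist(u, v)`, so `q(A)_{uv} = (A^d)_{uv}`.
-/

open SimpleGraph Matrix Finset Polynomial

lemma Matrix.aeval_mulVec_of_mulVec_eq_smul {R n : Type*} [CommRing R] [Fintype n] [DecidableEq n]
    {A : Matrix n n R} {x : n → R} {c : R} (hx : A *ᵥ x = c • x) (p : R[X]) :
    aeval A p *ᵥ x = p.eval c • x := by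
  have h := Module.End.aeval_apply_of_mem_apply_eq_smul (f := toLinAlgEquiv' A) (p := p)
    (by rwa [toLinAlgEquiv'_apply])
  rwa [aeval_algHom_apply, toLinAlgEquiv'_apply] at h

lemma Matrix.aeval_apply_eq_pow_apply_of_monic {R n : Type*} [CommSemiring R] [Fintype n]
    [DecidableEq n] (A : Matrix n n R) {q : R[X]} (hq : q.Monic) {u v : n}
    (h : ∀ i < q.natDegree, (A ^ i) u v = 0) : aeval A q u v = (A ^ q.natDegree) u v := by
  rw [aeval_eq_sum_range, Finset.sum_range_succ, hq.coeff_natDegree, one_smul, add_apply,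
    sum_apply, Finset.sum_eq_zero fun i hi => ?_, zero_add]
  rw [smul_apply, h i (Finset.mem_range.mp hi), smul_zero]

lemma aeval_eq_zero_of_forall_mem_spectrum {A : Type*} [Ring A] [StarRing A] [Algebra ℝ A]
    [TopologicalSpace A] [ContinuousFunctionalCalculus ℝ A IsSelfAdjoint] {a : A}
    (ha : IsSelfAdjoint a) {p : ℝ[X]} (hp : ∀ x ∈ spectrum ℝ a, p.eval x = 0) :
    aeval a p = 0 := by
  rw [← cfc_polynomial p a ha, cfc_congr (g := 0) hp, cfc_zero ℝ a]

namespace SimpleGraph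

variable {V : Type*} [Fintype V] [DecidableEq V] {G : SimpleGraph V} [DecidableRel G.Adj]

lemma adjMatrix_pow_apply_eq_zero_of_lt_dist {R : Type*} [Semiring R] {n : ℕ}
    {u v : V} (h : n < G.dist u v) : (G.adjMatrix R ^ n) u v = 0 := by
  rw [adjMatrix_pow_apply_eq_card_walk, Fintype.card_eq_zero_iff.mpr, Nat.cast_zero]
  exact ⟨fun ⟨w, hw⟩ => (G.dist_le w).not_gt ((show w.length = n from hw) ▸ h)⟩

namespace IsRegularOfDegree

variable {k : ℕ}

lemma eq_of_adjMatrix_mulVec_eq_smul (hconn : G.Connected) (hreg : G.IsRegularOfDegree k)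
    {x : V → ℝ} (hx : G.adjMatrix ℝ *ᵥ x = (k : ℝ) • x) (i j : V) : x i = x j := by
  refine (lapMatrix_mulVec_eq_zero_iff_forall_reachable G).mp ?_ i j (hconn i j)
  ext v
  rw [lapMatrix_mulVec_apply, hreg v, ← adjMatrix_mulVec_apply, hx]
  simp

lemma apply_eq_of_mul_adjMatrix_eq_smul (hconn : G.Connected) (hreg : G.IsRegularOfDegree k)
    {M : Matrix V V ℝ} (hM : M * G.adjMatrix ℝ = (k : ℝ) • M) (i j j' : V) : M i j = M i j' := by
  refine hreg.eq_of_adjMatrix_mulVec_eq_smul hconn ?_ j j'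
  ext l
  rw [← vecMul_transpose, transpose_adjMatrix, ← mul_apply_eq_vecMul, hM]
  rfl

lemma aeval_adjMatrix_apply_eq_eval_div_card (hconn : G.Connected) (hreg : G.IsRegularOfDegree k)
    {q : ℝ[X]} (hq : aeval (G.adjMatrix ℝ) (q * (X - C (k : ℝ))) = 0) (u v : V) :
    aeval (G.adjMatrix ℝ) q u v = q.eval (k : ℝ) / Fintype.card V := by
  have hM : aeval (G.adjMatrix ℝ) q * G.adjMatrix ℝ = (k : ℝ) • aeval (G.adjMatrix ℝ) q := by
    rwa [map_mul, map_sub, aeval_X, aeval_C, mul_sub, sub_eq_zero, ← Algebra.commutes,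
      ← Algebra.smul_def] at hq
  have hones : G.adjMatrix ℝ *ᵥ (fun _ => 1) = (k : ℝ) • fun _ => 1 := by
    ext
    simp [hreg _]
  have hrow_sum : ∑ j, aeval (G.adjMatrix ℝ) q u j = q.eval (k : ℝ) := by
    simpa [mulVec, dotProduct] using congrFun (aeval_mulVec_of_mulVec_eq_smul hones q) u
  have : Nonempty V := hconn.nonempty
  rw [Finset.sum_congr rfl fun j _ => hreg.apply_eq_of_mul_adjMatrix_eq_smul hconn hM u j v,
    sum_const, card_univ, nsmul_eq_mul] at hrow_sum
  rw [← hrow_sum, mul_div_cancel_left₀ _ (by positivity)]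

end IsRegularOfDegree

end SimpleGraph

theorem stmt_5_general {V : Type*} [Fintype V] [DecidableEq V] (G : SimpleGraph V)
    [DecidableRel G.Adj] (k d : ℕ) (lam : Fin (d + 1) → ℝ)
    (hconn : G.Connected) (hreg : G.IsRegularOfDegree k)
    (h0 : lam 0 = (k : ℝ))
    (hspec : spectrum ℝ (G.adjMatrix ℝ) = Set.range lam)
    (u v : V) (huv : G.dist u v = d) :
    ((G.adjMatrix ℝ) ^ d) u v
      = (∏ i ∈ Finset.Ioi (0 : Fin (d + 1)), ((k : ℝ) - lam i)) / (Fintype.card V : ℝ) := by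
  set q : ℝ[X] := ∏ i ∈ Ioi (0 : Fin (d + 1)), (X - C (lam i))
  have hq_monic : q.Monic := monic_prod_of_monic _ _ fun i _ => monic_X_sub_C (lam i)
  have hq_deg : q.natDegree = d := by simp [q]
  have hq_eval : q.eval (k : ℝ) = ∏ i ∈ Ioi (0 : Fin (d + 1)), ((k : ℝ) - lam i) := by
    simp [q, eval_prod]
  have hannih : aeval (G.adjMatrix ℝ) (q * (X - C (k : ℝ))) = 0 := by
    refine aeval_eq_zero_of_forall_mem_spectrum (G.isHermitian_adjMatrix ℝ) fun x hx => ?_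
    obtain ⟨i, rfl⟩ := hspec ▸ hx
    have hfactor : q * (X - C (k : ℝ)) = ∏ j, (X - C (lam j)) := by
      rw [← h0, Fin.prod_univ_succ, ← Fin.prod_Ioi_zero (fun j => X - C (lam j)), mul_comm]
    rw [hfactor, eval_prod]
    exact prod_eq_zero (mem_univ i) (by simp)
  rw [← hq_eval, ← hreg.aeval_adjMatrix_apply_eq_eval_div_card hconn hannih, ← hq_deg,
    aeval_apply_eq_pow_apply_of_monic _ hq_monic]
  exact fun i hi => adjMatrix_pow_apply_eq_zero_of_lt_dist (by omega)

/-- In a connected `k`-regular graph with `d+1` distinct eigenvalues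
`k = λ₀ > ⋯ > λ_d` and odd-girth at least `2d+1`, if `u` and `v` are at distance `d`
then `(A^d)_{uv} = π₀ / n` where `π₀ = ∏_{i=1}^d (k - λᵢ)`. -/
theorem stmt_5 {V : Type*} [Fintype V] [DecidableEq V] (G : SimpleGraph V)
    [DecidableRel G.Adj] (k d : ℕ) (lam : Fin (d + 1) → ℝ)
    (hconn : G.Connected) (hreg : G.IsRegularOfDegree k)
    (hanti : StrictAnti lam) (h0 : lam 0 = (k : ℝ))
    (hspec : spectrum ℝ (G.adjMatrix ℝ) = Set.range lam)
    (hog : ∀ (u : V) (w : G.Walk u u), w.IsCycle → Odd w.length → 2 * d + 1 ≤ w.length)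
    (u v : V) (huv : G.dist u v = d) :
    ((G.adjMatrix ℝ) ^ d) u v
      = (∏ i ∈ Finset.Ioi (0 : Fin (d + 1)), ((k : ℝ) - lam i)) / (Fintype.card V : ℝ) :=
  stmt_5_general G k d lam hconn hreg h0 hspec u v huv
end

section
/- Let Γ be a connected graph with odd-girth five whose adjacency matrix has exactly three distinct eigenvalues λ_0 > λ_1 > λ_2. Then Γ is regular. -/
/-!
Being Hermitian, `A = G.adjMatrix ℝ` is annihilated by `p = (X - λ₀)(X - λ₁)(X - λ₂)`. In a
triangle-free graph `A` and `A³` have zero diagonal while `(A²)ᵤᵤ = deg u`, so the `(u, u)` entry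
of `p(A) = 0` reads `(λ₀ + λ₁ + λ₂) deg u = λ₀λ₁λ₂`. If `λ₀ + λ₁ + λ₂ = 0` then also
`λ₀λ₁λ₂ = 0`, so every eigenvalue satisfies `x³ = c x`; then each odd power of `A` is a multiple
of `A`, and `G` has no closed walk of odd length, contradicting the 5-cycle.
-/

open SimpleGraph Matrix Polynomial

theorem Matrix.IsHermitian.aeval_eq_zero_of_forall_isRoot {n 𝕜 : Type*} [RCLike 𝕜] [Fintype n]
    [DecidableEq n] {A : Matrix n n 𝕜} (hA : A.IsHermitian) {p : ℝ[X]}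
    (hp : ∀ x ∈ spectrum ℝ A, p.IsRoot x) : aeval A p = 0 := by
  rw [← cfc_polynomial p A hA.isSelfAdjoint, ← cfc_const_zero ℝ A]
  exact cfc_congr hp

namespace SimpleGraph

variable {V : Type*} (G : SimpleGraph V)

theorem cliqueFree_three_of_forall_odd_cycle
    (hog : ∀ (u : V) (w : G.Walk u u), w.IsCycle → Odd w.length → 5 ≤ w.length) :
    G.CliqueFree 3 := by
  intro s hs
  obtain ⟨u, w, hw, hlen⟩ := is3Clique_iff_exists_cycle_length_three.mp ⟨s, hs⟩
  have := hog u w hw (by rw [hlen]; decide)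
  omega

variable [Fintype V] [DecidableEq V] [DecidableRel G.Adj] {R : Type*}

theorem adjMatrix_pow_length_apply_ne_zero [Semiring R] [CharZero R] {u v : V}
    (w : G.Walk u v) : (G.adjMatrix R ^ w.length) u v ≠ 0 := by
  rw [adjMatrix_pow_apply_eq_card_walk, Nat.cast_ne_zero]
  have : Nonempty {p : G.Walk u v | p.length = w.length} := ⟨⟨w, rfl⟩⟩
  exact Fintype.card_ne_zero

variable {G} in
theorem CliqueFree.adjMatrix_pow_three_apply_self [Semiring R] (h : G.CliqueFree 3) (u : V) :
    (G.adjMatrix R ^ 3) u u = 0 := by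
  have : IsEmpty {w : G.Walk u u | w.length = 3} := ⟨fun ⟨w, hw⟩ => by
    match w, hw with
    | .cons hab (.cons hbc (.cons hca .nil)), _ =>
      exact h {u, _, _} (is3Clique_triple_iff.mpr ⟨hab, hca.symm, hbc⟩)⟩
  rw [adjMatrix_pow_apply_eq_card_walk, Fintype.card_eq_zero, Nat.cast_zero]

variable {G} in
theorem CliqueFree.aeval_adjMatrix_apply_self [CommSemiring R] (h : G.CliqueFree 3) {p : R[X]}
    (hp : p.natDegree ≤ 3) (u : V) :
    aeval (G.adjMatrix R) p u u = p.coeff 0 + p.coeff 2 * G.degree u := by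
  rw [aeval_eq_sum_range' (Nat.lt_succ_of_le hp)]
  simp only [Finset.sum_range_succ, Finset.sum_range_zero, zero_add, Matrix.add_apply,
    Matrix.smul_apply, pow_zero, pow_one, sq, adjMatrix_mul_self_apply_self,
    h.adjMatrix_pow_three_apply_self]
  simp

theorem even_length_of_forall_mem_spectrum_pow_three_eq_mul {c : ℝ}
    (hspec : ∀ x ∈ spectrum ℝ (G.adjMatrix ℝ), x ^ 3 = c * x) {u : V} (w : G.Walk u u) :
    Even w.length := by
  by_contra hodd
  obtain ⟨m, hm⟩ := Nat.not_even_iff_odd.mp hodd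
  have hroot : ∀ x ∈ spectrum ℝ (G.adjMatrix ℝ), (X ^ (2 * m + 1) - C (c ^ m) * X).IsRoot x := by
    intro x hx
    have hx2 : x = 0 ∨ x ^ 2 = c := by
      by_cases hx0 : x = 0
      · exact .inl hx0
      · exact .inr (mul_right_cancel₀ hx0 (by linear_combination hspec x hx))
    rcases hx2 with rfl | hx2
    · simp
    · simp only [IsRoot, eval_sub, eval_pow, eval_X, eval_mul, eval_C]
      rw [pow_succ, pow_mul, hx2, sub_self]
  have hpow : G.adjMatrix ℝ ^ (2 * m + 1) = c ^ m • G.adjMatrix ℝ := by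
    simpa [sub_eq_zero, Algebra.smul_def] using
      (G.isHermitian_adjMatrix ℝ).aeval_eq_zero_of_forall_isRoot hroot
  apply G.adjMatrix_pow_length_apply_ne_zero (R := ℝ) w
  rw [hm, hpow]
  simp

end SimpleGraph

theorem stmt_14_general {V : Type*} [Fintype V] [DecidableEq V] (G : SimpleGraph V)
    [DecidableRel G.Adj] (lam0 lam1 lam2 : ℝ)
    (h5 : ∃ (u : V) (w : G.Walk u u), w.IsCycle ∧ w.length = 5)
    (hog : ∀ (u : V) (w : G.Walk u u), w.IsCycle → Odd w.length → 5 ≤ w.length)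
    (hspec : spectrum ℝ (G.adjMatrix ℝ) = {lam0, lam1, lam2}) :
    ∃ k : ℕ, G.IsRegularOfDegree k := by
  set s := lam0 + lam1 + lam2
  set q := lam0 * lam1 + lam0 * lam2 + lam1 * lam2
  set r := lam0 * lam1 * lam2
  have hroot : ∀ x ∈ spectrum ℝ (G.adjMatrix ℝ), x ^ 3 - s * x ^ 2 + q * x - r = 0 := by
    rw [hspec]
    rintro x (rfl | rfl | rfl) <;> ring
  have hp : aeval (G.adjMatrix ℝ) (X ^ 3 - C s * X ^ 2 + C q * X - C r) = 0 :=
    (G.isHermitian_adjMatrix ℝ).aeval_eq_zero_of_forall_isRoot (by simpa using hroot)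
  have hdeg (u : V) : s * G.degree u + r = 0 := by
    have hdiag := (G.cliqueFree_three_of_forall_odd_cycle hog).aeval_adjMatrix_apply_self
      (p := X ^ 3 - C s * X ^ 2 + C q * X - C r) (by compute_degree) u
    simp only [hp, Matrix.zero_apply, coeff_sub, coeff_add, coeff_C_mul, coeff_X_pow, coeff_X,
      coeff_C, mul_coeff_zero] at hdiag
    norm_num at hdiag
    linarith
  obtain ⟨u, w, -, hw⟩ := h5
  have hs : s ≠ 0 := fun hs => by
    have hr : r = 0 := by simpa [hs] using hdeg u
    have := G.even_length_of_forall_mem_spectrum_pow_three_eq_mul (c := -q)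
      (fun x hx => by linear_combination hroot x hx + x ^ 2 * hs + hr) w
    exact (by decide : ¬Even 5) (hw ▸ this)
  refine ⟨G.degree u, fun v => ?_⟩
  have : (G.degree v : ℝ) = G.degree u :=
    mul_left_cancel₀ hs (by linear_combination hdeg v - hdeg u)
  exact_mod_cast this

/-- A connected graph with odd-girth five (it has a 5-cycle and no
shorter odd cycle) whose adjacency matrix has exactly three distinct eigenvalues
`λ₀ > λ₁ > λ₂` is regular. -/
theorem stmt_14 {V : Type*} [Fintype V] [DecidableEq V] (G : SimpleGraph V)
    [DecidableRel G.Adj] (lam0 lam1 lam2 : ℝ)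
    (hconn : G.Connected)
    (h5 : ∃ (u : V) (w : G.Walk u u), w.IsCycle ∧ w.length = 5)
    (hog : ∀ (u : V) (w : G.Walk u u), w.IsCycle → Odd w.length → 5 ≤ w.length)
    (h01 : lam0 > lam1) (h12 : lam1 > lam2)
    (hspec : spectrum ℝ (G.adjMatrix ℝ) = {lam0, lam1, lam2}) :
    ∃ k : ℕ, G.IsRegularOfDegree k :=
  stmt_14_general G lam0 lam1 lam2 h5 hog hspec
end

section
/- Let A be the adjacency matrix of a triangle-free graph with distinct eigenvalues λ_0 > λ_1 > λ_2 (exactly three). Then for every vertex u, (λ_0 + λ_1 + λ_2) · deg(u) = −λ_0 λ_1 λ_2. -/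
/-! A self-adjoint matrix is annihilated by every polynomial vanishing on its spectrum, so
`(A - λ₀)(A - λ₁)(A - λ₂) = 0` for the adjacency matrix `A`. On the diagonal, `A³` vanishes
because there are no closed walks of length three, `A` vanishes because there are no loops,
and `A²` contributes the degree. -/

open SimpleGraph Polynomial

theorem Polynomial.aeval_eq_zero_of_forall_mem_spectrum_isRoot {R A : Type*} {p : A → Prop}
    [CommSemiring R] [StarRing R] [MetricSpace R] [IsTopologicalSemiring R] [ContinuousStar R]
    [TopologicalSpace A] [Ring A] [StarRing A] [Algebra R A] [ContinuousFunctionalCalculus R A p]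
    {a : A} (ha : p a) {q : R[X]} (hq : ∀ x ∈ spectrum R a, q.IsRoot x) : aeval a q = 0 := by
  rw [← cfc_polynomial q a, cfc_congr hq, cfc_const_zero]

namespace SimpleGraph

variable {V : Type*} [Fintype V] [DecidableEq V] {G : SimpleGraph V} [DecidableRel G.Adj]

theorem adjMatrix_pow_three_apply_self_of_cliqueFree (R : Type*) [Semiring R]
    (htf : G.CliqueFree 3) (u : V) : (G.adjMatrix R ^ 3) u u = 0 := by
  have hno : IsEmpty { p : G.Walk u u | p.length = 3 } := by
    refine ⟨fun ⟨p, hp⟩ => ?_⟩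
    rcases p with _ | ⟨h₁, _ | ⟨h₂, _ | ⟨h₃, _ | ⟨_, _⟩⟩⟩⟩ <;> simp at hp
    exact htf _ (is3Clique_triple_iff.2 ⟨h₁, h₃.symm, h₂⟩)
  rw [adjMatrix_pow_apply_eq_card_walk, Fintype.card_eq_zero, Nat.cast_zero]

theorem aeval_adjMatrix_cubic_apply_self_of_cliqueFree {R : Type*} [CommRing R]
    (htf : G.CliqueFree 3) (a b c : R) (u : V) :
    aeval (G.adjMatrix R) ((X - C a) * (X - C b) * (X - C c)) u u =
      -((a + b + c) * G.degree u) - a * b * c := by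
  set A := G.adjMatrix R
  have hexpand : aeval A ((X - C a) * (X - C b) * (X - C c)) =
      A ^ 3 - (a + b + c) • A ^ 2 + (a * b + a * c + b * c) • A - (a * b * c) • 1 := by
    simp only [map_mul, map_sub, aeval_X, aeval_C, Algebra.algebraMap_eq_smul_one,
      Matrix.mul_sub, Matrix.sub_mul, Matrix.smul_mul, Matrix.mul_smul, Matrix.one_mul,
      Matrix.mul_one, pow_succ, pow_zero]
    module
  have hdeg : (A * A) u u = G.degree u := adjMatrix_mul_self_apply_self G u
  simp [hexpand, sq, hdeg, A, adjMatrix_pow_three_apply_self_of_cliqueFree R htf]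

end SimpleGraph

theorem stmt_15_general {V : Type*} [Fintype V] [DecidableEq V] (G : SimpleGraph V)
    [DecidableRel G.Adj] (lam0 lam1 lam2 : ℝ)
    (htf : G.CliqueFree 3)
    (hspec : spectrum ℝ (G.adjMatrix ℝ) = {lam0, lam1, lam2}) :
    ∀ u : V, (lam0 + lam1 + lam2) * (G.degree u : ℝ) = -(lam0 * lam1 * lam2) := by
  intro u
  have hroots : ∀ x ∈ spectrum ℝ (G.adjMatrix ℝ),
      ((X - C lam0) * (X - C lam1) * (X - C lam2)).IsRoot x := by
    rw [hspec]
    rintro x (rfl | rfl | rfl) <;> simp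
  have hA : IsSelfAdjoint (G.adjMatrix ℝ) := G.isSymm_adjMatrix
  have hzero := congrFun₂ (aeval_eq_zero_of_forall_mem_spectrum_isRoot hA hroots) u u
  rw [aeval_adjMatrix_cubic_apply_self_of_cliqueFree htf, Matrix.zero_apply] at hzero
  linarith

/-- If the adjacency matrix of a triangle-free graph has exactly three
distinct eigenvalues `λ₀ > λ₁ > λ₂`, then for every vertex `u`,
`(λ₀ + λ₁ + λ₂) · deg(u) = −λ₀λ₁λ₂`. -/
theorem stmt_15 {V : Type*} [Fintype V] [DecidableEq V] (G : SimpleGraph V)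
    [DecidableRel G.Adj] (lam0 lam1 lam2 : ℝ)
    (htf : G.CliqueFree 3)
    (h01 : lam0 > lam1) (h12 : lam1 > lam2)
    (hspec : spectrum ℝ (G.adjMatrix ℝ) = {lam0, lam1, lam2}) :
    ∀ u : V, (lam0 + lam1 + lam2) * (G.degree u : ℝ) = -(lam0 * lam1 * lam2) :=
  stmt_15_general G lam0 lam1 lam2 htf hspec
end

section
/- Let Γ be a connected triangle-free graph with an odd cycle whose Laplacian matrix has three distinct eigenvalues. Then Γ is regular. -/
open SimpleGraph Matrix Polynomial

/-!
If the Laplacian `L` has spectrum `{0, μ, ν}`, the spectral calculus gives `L N = 0` for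
`N = L² - (μ + ν) L + μν`. On a connected graph the kernel of `L` consists of the constant
vectors, so every column of the symmetric matrix `N` is constant, and hence `N` is a constant
matrix. At an edge `uv` of a triangle-free graph `(L²)_{uv} = -(d_u + d_v)`, so `d_u + d_v` is
the same constant `c` for all edges. The shifted degree `d - c / 2` then changes sign along each
edge, and an odd closed walk forces it to vanish.
-/

section SpectralCalculus

variable {R A : Type*} {p : A → Prop} [CommSemiring R] [StarRing R] [MetricSpace R]
  [IsTopologicalSemiring R] [ContinuousStar R] [TopologicalSpace A] [Ring A] [StarRing A]
  [Algebra R A] [ContinuousFunctionalCalculus R A p]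

theorem aeval_eq_zero_of_forall_mem_spectrum_s16 {a : A} (ha : p a) (q : R[X])
    (hq : ∀ x ∈ spectrum R a, q.eval x = 0) : aeval a q = 0 := by
  rw [← cfc_polynomial q a, cfc_congr (g := 0) hq, cfc_zero]

end SpectralCalculus

theorem Set.exists_eq_insert_pair_of_ncard_eq_three {α : Type*} {s : Set α} {a : α}
    (hs : s.ncard = 3) (ha : a ∈ s) : ∃ b c, s = {a, b, c} := by
  obtain ⟨b, c, -, hbc⟩ := Set.ncard_eq_two.mp <| by
    rw [Set.ncard_sdiff_singleton_of_mem ha, hs]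
  exact ⟨b, c, by rw [← hbc, Set.insert_sdiff_singleton, Set.insert_eq_of_mem ha]⟩

namespace SimpleGraph

variable {V : Type*} {G : SimpleGraph V}

theorem Walk.apply_eq_neg_one_pow_mul {R : Type*} [Ring R] {f : V → R}
    (hf : ∀ x y, G.Adj x y → f x + f y = 0) {x y : V} (p : G.Walk x y) :
    f y = (-1) ^ p.length * f x := by
  induction p with
  | nil => simp
  | @cons x z y h p ih =>
    rw [ih, eq_neg_of_add_eq_zero_right (hf x z h), Walk.length_cons, pow_succ]
    noncomm_ring

theorem Connected.apply_eq_of_add_eq {R : Type*} [Field R] [CharZero R]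
    (hG : G.Connected) {u : V} (w : G.Walk u u) (hw : Odd w.length) {f : V → R} {c : R}
    (hf : ∀ x y, G.Adj x y → f x + f y = c) (x y : V) : f x = f y := by
  set g : V → R := fun v => f v - c / 2
  have hg : ∀ x y, G.Adj x y → g x + g y = 0 := fun x y h => by
    simp only [g, ← hf x y h]; ring
  have hgu : g u = 0 := by
    have := w.apply_eq_neg_one_pow_mul hg
    rw [hw.neg_one_pow, neg_one_mul, eq_neg_iff_add_eq_zero, ← two_mul] at this
    exact (mul_eq_zero.mp this).resolve_left two_ne_zero
  have hg0 : ∀ v, g v = 0 := fun v => by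
    obtain ⟨p⟩ := hG u v
    rw [p.apply_eq_neg_one_pow_mul hg, hgu, mul_zero]
  simpa [g, sub_eq_zero] using (hg0 x).trans (hg0 y).symm

theorem Connected.isRegularOfDegree_of_degree_add_eq [Fintype V] [DecidableRel G.Adj]
    (hG : G.Connected) {u : V} (w : G.Walk u u) (hw : Odd w.length) {c : ℝ}
    (hc : ∀ x y, G.Adj x y → (G.degree x : ℝ) + G.degree y = c) :
    G.IsRegularOfDegree (G.degree u) := fun v => by
  exact_mod_cast hG.apply_eq_of_add_eq w hw hc v u

theorem adjMatrix_mul_self_apply_eq_zero {R : Type*} [Fintype V] [DecidableRel G.Adj]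
    [NonAssocSemiring R] (hG : G.CliqueFree 3) {u v : V} (huv : G.Adj u v) :
    (G.adjMatrix R * G.adjMatrix R) u v = 0 := by
  classical
  rw [adjMatrix_mul_apply]
  refine Finset.sum_eq_zero fun w hw => ?_
  have hnot : ¬ G.Adj w v := fun hwv =>
    hG {u, w, v} (is3Clique_triple_iff.mpr ⟨(mem_neighborFinset _ _ _).mp hw, huv, hwv⟩)
  simp [hnot]

theorem lapMatrix_mul_self_apply_of_adj {R : Type*} [Fintype V] [DecidableEq V]
    [DecidableRel G.Adj] [Ring R] (hG : G.CliqueFree 3) {u v : V} (huv : G.Adj u v) :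
    (G.lapMatrix R * G.lapMatrix R) u v = -(G.degree u + G.degree v) := by
  rw [lapMatrix, degMatrix, sub_mul, mul_sub, mul_sub, Matrix.sub_apply, Matrix.sub_apply,
    Matrix.sub_apply, diagonal_mul_diagonal, diagonal_mul, mul_diagonal,
    adjMatrix_mul_self_apply_eq_zero hG huv]
  simp only [diagonal_apply_ne _ huv.ne, adjMatrix_apply, huv, if_true, mul_one, one_mul]
  abel

theorem Connected.apply_eq_apply_of_lapMatrix_mul_eq_zero [Fintype V] [DecidableEq V]
    [DecidableRel G.Adj] (hG : G.Connected) {N : Matrix V V ℝ} (hN : G.lapMatrix ℝ * N = 0)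
    (hsymm : N.IsSymm) (i j i' j' : V) : N i j = N i' j' := by
  have hcol : ∀ i i' j, N i j = N i' j := fun i i' j =>
    G.lapMatrix_mulVec_eq_zero_iff_forall_reachable.mp
      (funext fun k => congrFun (congrFun hN k) j) i i' (hG i i')
  rw [hcol i i' j, ← hsymm.apply i' j, ← hsymm.apply i' j', hcol j j' i']

theorem exists_lapMatrix_mul_eq_zero [Fintype V] [DecidableEq V] [DecidableRel G.Adj]
    [Nonempty V] (hL : (spectrum ℝ (G.lapMatrix ℝ)).ncard = 3) :
    ∃ μ ν : ℝ, G.lapMatrix ℝ *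
      (G.lapMatrix ℝ ^ 2 - (μ + ν) • G.lapMatrix ℝ + (μ * ν) • 1) = 0 := by
  have h0 : (0 : ℝ) ∈ spectrum ℝ (G.lapMatrix ℝ) := by
    rw [spectrum.zero_mem_iff, isUnit_iff_isUnit_det, det_lapMatrix_eq_zero]
    exact not_isUnit_zero
  obtain ⟨μ, ν, hspec⟩ := Set.exists_eq_insert_pair_of_ncard_eq_three hL h0
  refine ⟨μ, ν, ?_⟩
  have := aeval_eq_zero_of_forall_mem_spectrum_s16 (isHermitian_lapMatrix ℝ G)
    (X * (X ^ 2 - (μ + ν) • X + (μ * ν) • 1) : ℝ[X])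
    (by rw [hspec]; rintro x (rfl | rfl | rfl) <;>
      simp only [eval_mul, eval_X, eval_add, eval_sub, eval_pow, eval_smul, eval_one,
        smul_eq_mul] <;> ring)
  simpa only [map_mul, map_add, map_sub, map_pow, map_smul, map_one, aeval_X] using this

end SimpleGraph

/-- A connected triangle-free graph containing an odd cycle whose
Laplacian matrix has exactly three distinct eigenvalues is regular. -/
theorem stmt_16 {V : Type*} [Fintype V] [DecidableEq V] (G : SimpleGraph V)
    [DecidableRel G.Adj]
    (hconn : G.Connected) (htf : G.CliqueFree 3)
    (hoddcycle : ∃ (u : V) (w : G.Walk u u), w.IsCycle ∧ Odd w.length)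
    (hL : (spectrum ℝ (G.lapMatrix ℝ)).ncard = 3) :
    ∃ k : ℕ, G.IsRegularOfDegree k := by
  obtain ⟨u, w, -, hodd⟩ := hoddcycle
  have : Nonempty V := ⟨u⟩
  obtain ⟨μ, ν, hann⟩ := G.exists_lapMatrix_mul_eq_zero hL
  set N := G.lapMatrix ℝ ^ 2 - (μ + ν) • G.lapMatrix ℝ + (μ * ν) • 1
  have hsymm : N.IsSymm :=
    (((isSymm_lapMatrix ℝ G).pow 2).sub ((isSymm_lapMatrix ℝ G).smul _)).add (isSymm_one.smul _)
  have hedge : ∀ x y, G.Adj x y → (G.degree x : ℝ) + G.degree y = μ + ν - N u u := by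
    intro x y hxy
    have hNxy : N x y = -(G.degree x + G.degree y) + (μ + ν) := by
      simp only [N, Matrix.add_apply, Matrix.sub_apply, sq,
        lapMatrix_mul_self_apply_of_adj htf hxy]
      simp only [Matrix.smul_apply, one_apply_ne hxy.ne, lapMatrix, degMatrix, Matrix.sub_apply,
        diagonal_apply_ne _ hxy.ne, adjMatrix_apply, hxy, if_true, smul_eq_mul]
      ring
    linarith [hconn.apply_eq_apply_of_lapMatrix_mul_eq_zero hann hsymm x y u u]
  exact ⟨_, hconn.isRegularOfDegree_of_degree_add_eq w hodd hedge⟩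
end
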